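/- Let n ≥ 2. If T : S^n_+ → S^n_+ is a bijective map that is 1-Lipschitz with respect to the geodesic distance, then T is an isometry fixing the north pole N (there exists an n×n orthogonal matrix A with T((z,x_{n+1})) = (Az, x_{n+1}) for all (z,x_{n+1}) ∈ S^n_+). In particular, the pushforward of σ_+ under T equals σ_+. -/

import Mathlib

open MeasureTheory Real

noncomputable section

/-- Euclidean space `ℝ^{n+1}`. -/
abbrev Euc (n : ℕ) := EuclideanSpace ℝ (Fin (n + 1))

/-- The unit sphere `S^n ⊆ ℝ^{n+1}`. -/
def unitSphere (n : ℕ) : Set (Euc n) := Metric.sphere 0 1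

/-- The closed upper half-sphere `S^n_+`. -/
def upperHemi (n : ℕ) : Set (Euc n) := {x ∈ unitSphere n | 0 ≤ x (Fin.last n)}

/-- The equator `C = S^n_+ ∩ {x_{n+1} = 0}`. -/
def equator (n : ℕ) : Set (Euc n) := {x ∈ upperHemi n | x (Fin.last n) = 0}

/-- The geodesic distance on the sphere: `d(x,y) = arccos (x ⬝ y)`. -/
def geod {n : ℕ} (x y : Euc n) : ℝ := Real.arccos (inner ℝ x y)

/-- The north pole `N = (0,…,0,1)`. -/
def northPole (n : ℕ) : Euc n := EuclideanSpace.single (Fin.last n) 1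

/-- The uniform probability measure `σ_+` on the upper half-sphere, i.e. the normalized
restriction to `S^n_+` of the `n`-dimensional Hausdorff measure. -/
def sigmaPlus (n : ℕ) : Measure (Euc n) :=
  ((μH[n] : Measure (Euc n)) (upperHemi n))⁻¹ • (μH[n] : Measure (Euc n)).restrict (upperHemi n)

/-!
A surjective `1`-Lipschitz self-map `f` of a compact metric space is an isometry: iterating a
right inverse `g` of `f` on a pair `(a, b)`, compactness yields some `p` for which `g^[p + 1]`
moves both `a` and `b` arbitrarily little, and `f^[p + 1]` brings them back without increasing
their distance.

On the unit sphere both the geodesic and the chordal distance are decreasing functions of the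
inner product, so `T` is an isometry of `S^n_+` for the chordal metric and hence preserves inner
products. As `S^n_+` contains the standard basis, `T` agrees on `S^n_+` with a linear isometry `L`
mapping `S^n_+` onto itself. The north pole is the only point of `S^n_+` having nonnegative inner
product with all of `S^n_+`, so `L` fixes it and therefore acts by an orthogonal matrix on the
first `n` coordinates. Finally `L` preserves Hausdorff measure.
-/

open Function Set

section Nonexpanding

variable {X : Type*} [PseudoMetricSpace X]

theorem exists_dist_lt_of_compactSpace [CompactSpace X] (u : ℕ → X) {ε : ℝ} (hε : 0 < ε) :
    ∃ m p, dist (u m) (u (m + p + 1)) < ε := by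
  obtain ⟨x, -, φ, hφ, hlim⟩ := isCompact_univ.tendsto_subseq fun k => mem_univ (u k)
  obtain ⟨N, hN⟩ := Metric.cauchySeq_iff'.1 hlim.cauchySeq ε hε
  have hlt : φ N < φ (N + 1) := hφ N.lt_succ_self
  refine ⟨φ N, φ (N + 1) - φ N - 1, ?_⟩
  rw [show φ N + (φ (N + 1) - φ N - 1) + 1 = φ (N + 1) by omega, dist_comm]
  exact hN (N + 1) N.le_succ

theorem LipschitzWith.dist_iterate_rightInverse_le {f g : X → X} (hf : LipschitzWith 1 f)
    (hg : RightInverse g f) (x : X) (m p : ℕ) :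
    dist x (g^[p] x) ≤ dist (g^[m] x) (g^[m + p] x) := by
  simpa [iterate_add_apply, (hg.iterate m) _] using
    (hf.iterate m).dist_le_mul (g^[m] x) (g^[m + p] x)

theorem LipschitzWith.isometry_of_surjective [CompactSpace X] {f : X → X}
    (hf : LipschitzWith 1 f) (hsurj : Surjective f) : Isometry f := by
  have hf1 : ∀ x y, dist (f x) (f y) ≤ dist x y := fun x y => by simpa using hf.dist_le_mul x y
  refine Isometry.of_dist_eq fun a b => le_antisymm (hf1 a b) ?_
  refine le_of_forall_pos_le_add fun ε hε => ?_
  obtain ⟨g, hg⟩ := hsurj.hasRightInverse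
  obtain ⟨m, p, hmp⟩ :=
    exists_dist_lt_of_compactSpace (fun k => (g^[k] a, g^[k] b)) (half_pos hε)
  rw [Prod.dist_eq, max_lt_iff, add_assoc] at hmp
  have ha := (hf.dist_iterate_rightInverse_le hg a m (p + 1)).trans_lt hmp.1
  have hb := (hf.dist_iterate_rightInverse_le hg b m (p + 1)).trans_lt hmp.2
  set a' := g^[p + 1] a
  set b' := g^[p + 1] b
  calc dist a b = dist (f^[p] (f a')) (f^[p] (f b')) := by
        simp only [← iterate_succ_apply, a', b', (hg.iterate _) _]
    _ ≤ dist (f a') (f b') := by simpa using (hf.iterate p).dist_le_mul (f a') (f b')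
    _ ≤ dist (f a') (f a) + dist (f a) (f b) + dist (f b) (f b') := dist_triangle4 _ _ _ _
    _ ≤ dist a' a + dist (f a) (f b) + dist b b' := by gcongr <;> exact hf1 _ _
    _ ≤ dist (f a) (f b) + ε := by rw [dist_comm] at ha; linarith

theorem LipschitzOnWith.dist_eq_of_surjOn {s : Set X} (hs : IsCompact s) {f : X → X}
    (hmaps : MapsTo f s s) (hsurj : SurjOn f s s) (hf : LipschitzOnWith 1 f s) {x y : X}
    (hx : x ∈ s) (hy : y ∈ s) : dist (f x) (f y) = dist x y := by
  have := isCompact_iff_compactSpace.mp hs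
  exact ((hf.mapsToRestrict hmaps).isometry_of_surjective
    (hmaps.restrict_surjective_iff.2 hsurj)).dist_eq ⟨x, hx⟩ ⟨y, hy⟩

end Nonexpanding

section InnerProduct

variable {E : Type*} [NormedAddCommGroup E] [InnerProductSpace ℝ E]

theorem real_inner_eq_one_sub_dist_sq_div_two {x y : E} (hx : ‖x‖ = 1) (hy : ‖y‖ = 1) :
    inner ℝ x y = 1 - dist x y ^ 2 / 2 := by
  rw [dist_eq_norm, norm_sub_sq_real, hx, hy]
  ring

theorem dist_le_dist_of_arccos_inner_le {a b c d : E} (ha : ‖a‖ = 1) (hb : ‖b‖ = 1)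
    (hc : ‖c‖ = 1) (hd : ‖d‖ = 1) (h : arccos (inner ℝ a b) ≤ arccos (inner ℝ c d)) :
    dist a b ≤ dist c d := by
  have hmem : ∀ {x y : E}, ‖x‖ = 1 → ‖y‖ = 1 → inner ℝ x y ∈ Icc (-1 : ℝ) 1 :=
    fun {x y} hx hy => abs_le.1 (by simpa [hx, hy] using abs_real_inner_le_norm x y)
  have hinner := (strictAntiOn_arccos.le_iff_ge (hmem ha hb) (hmem hc hd)).1 h
  rw [real_inner_eq_one_sub_dist_sq_div_two ha hb,
    real_inner_eq_one_sub_dist_sq_div_two hc hd] at hinner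
  nlinarith [dist_nonneg (x := a) (y := b), dist_nonneg (x := c) (y := d)]

theorem exists_linearIsometryEquiv_eqOn {ι : Type*} [Fintype ι] (b : OrthonormalBasis ι ℝ E)
    {s : Set E} (hb : ∀ i, b i ∈ s) {f : E → E}
    (hf : ∀ x ∈ s, ∀ y ∈ s, inner ℝ (f x) (f y) = inner ℝ x y) :
    ∃ L : E ≃ₗᵢ[ℝ] E, EqOn f L s := by
  classical
  have hON : Orthonormal ℝ (f ∘ b) := by
    rw [orthonormal_iff_ite]
    intro i j
    rw [comp_apply, comp_apply, hf _ (hb i) _ (hb j)]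
    exact orthonormal_iff_ite.1 b.orthonormal i j
  have : FiniteDimensional ℝ E := b.toBasis.finiteDimensional_of_finite
  let b' := OrthonormalBasis.mk hON (hON.linearIndependent.span_eq_top_of_card_eq_finrank'
    (Module.finrank_eq_card_basis b.toBasis).symm).ge
  let L := b.equiv b' (Equiv.refl ι)
  refine ⟨L, fun x hx => InnerProductSpace.ext_inner_left_basis b'.toBasis fun i => ?_⟩
  calc inner ℝ (b'.toBasis i) (f x) = inner ℝ (f (b i)) (f x) := by simp [b']
    _ = inner ℝ (b i) x := hf _ (hb i) _ hx
    _ = inner ℝ (L (b i)) (L x) := (L.inner_map_map _ _).symm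
    _ = inner ℝ (b'.toBasis i) (L x) := by simp [L]

end InnerProduct

section Hemisphere

variable {n : ℕ}

theorem norm_eq_one_of_mem_upperHemi {x : Euc n} (hx : x ∈ upperHemi n) : ‖x‖ = 1 :=
  mem_sphere_zero_iff_norm.1 hx.1

theorem isCompact_upperHemi (n : ℕ) : IsCompact (upperHemi n) :=
  (isCompact_sphere 0 1).inter_right
    (isClosed_le continuous_const (EuclideanSpace.proj (𝕜 := ℝ) (Fin.last n)).continuous)

theorem single_mem_upperHemi {i : Fin (n + 1)} {a : ℝ} (ha : |a| = 1)
    (hlast : i = Fin.last n → 0 ≤ a) : EuclideanSpace.single i a ∈ upperHemi n := by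
  refine ⟨mem_sphere_zero_iff_norm.2 (by simpa using ha), ?_⟩
  by_cases hi : i = Fin.last n
  · simpa [hi] using hlast hi
  · simp [Ne.symm hi]

theorem northPole_mem_upperHemi (n : ℕ) : northPole n ∈ upperHemi n :=
  single_mem_upperHemi (by simp) fun _ => zero_le_one

theorem inner_northPole_left (x : Euc n) : inner ℝ (northPole n) x = x (Fin.last n) := by
  simp [northPole, EuclideanSpace.inner_single_left]

theorem eq_northPole_of_forall_inner_nonneg {w : Euc n} (hw : w ∈ upperHemi n)
    (h : ∀ y ∈ upperHemi n, 0 ≤ inner ℝ w y) : w = northPole n := by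
  have hcoord : ∀ i ≠ Fin.last n, w i = 0 := fun i hi => by
    have hpos := h _ (single_mem_upperHemi (a := 1) (by simp) (absurd · hi))
    have hneg := h _ (single_mem_upperHemi (a := -1) (by simp) (absurd · hi))
    simp [EuclideanSpace.inner_single_right] at hpos hneg
    linarith
  have hw_eq : w = EuclideanSpace.single (Fin.last n) (w (Fin.last n)) := by
    ext i
    by_cases hi : i = Fin.last n
    · simp [hi]
    · simp [hi, hcoord i hi]
  have hnorm := norm_eq_one_of_mem_upperHemi hw
  rw [hw_eq, PiLp.norm_single, Real.norm_eq_abs, abs_of_nonneg hw.2] at hnorm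
  rw [hw_eq, hnorm, northPole]

theorem inner_map_map_of_surjOn_of_geod_le {T : Euc n → Euc n}
    (hmaps : MapsTo T (upperHemi n) (upperHemi n)) (hsurj : SurjOn T (upperHemi n) (upperHemi n))
    (hT : ∀ x ∈ upperHemi n, ∀ y ∈ upperHemi n, geod (T x) (T y) ≤ geod x y) :
    ∀ x ∈ upperHemi n, ∀ y ∈ upperHemi n, inner ℝ (T x) (T y) = inner ℝ x y := by
  have hunit := @norm_eq_one_of_mem_upperHemi n
  have hlip : LipschitzOnWith 1 T (upperHemi n) := .of_dist_le_mul fun x hx y hy => by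
    simpa using dist_le_dist_of_arccos_inner_le (hunit (hmaps hx)) (hunit (hmaps hy))
      (hunit hx) (hunit hy) (hT x hx y hy)
  intro x hx y hy
  rw [real_inner_eq_one_sub_dist_sq_div_two (hunit (hmaps hx)) (hunit (hmaps hy)),
    real_inner_eq_one_sub_dist_sq_div_two (hunit hx) (hunit hy),
    hlip.dist_eq_of_surjOn (isCompact_upperHemi n) hmaps hsurj hx hy]

end Hemisphere

section LinearIsometry

variable {n : ℕ} (L : Euc n ≃ₗᵢ[ℝ] Euc n)

theorem LinearIsometryEquiv.map_northPole_of_preimage_upperHemi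
    (hL : L ⁻¹' upperHemi n = upperHemi n) : L (northPole n) = northPole n := by
  have hmem : ∀ {x}, x ∈ upperHemi n → L x ∈ upperHemi n := fun hx => by
    rwa [← mem_preimage, hL]
  refine eq_northPole_of_forall_inner_nonneg (hmem (northPole_mem_upperHemi n)) fun y hy => ?_
  have hy' : L.symm y ∈ upperHemi n := by rwa [← hL, mem_preimage, L.apply_symm_apply]
  rw [← L.apply_symm_apply y, L.inner_map_map, inner_northPole_left]
  exact hy'.2

variable {L}

theorem LinearIsometryEquiv.apply_last_of_map_northPole (hL : L (northPole n) = northPole n)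
    (x : Euc n) : L x (Fin.last n) = x (Fin.last n) := by
  rw [← inner_northPole_left, ← hL, L.inner_map_map, inner_northPole_left]

theorem LinearIsometryEquiv.exists_orthogonal_of_map_northPole
    (hL : L (northPole n) = northPole n) :
    ∃ A : Matrix (Fin n) (Fin n) ℝ, A.transpose * A = 1 ∧
      ∀ x : Euc n, ∀ i : Fin n, L x i.castSucc = ∑ j : Fin n, A i j * x j.castSucc := by
  set e : Fin (n + 1) → Euc n := fun k => EuclideanSpace.single k 1
  have hcoord : ∀ x : Euc n, ∀ i, L x i = ∑ k, x k * L (e k) i := fun x i => by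
    conv_lhs => rw [← (EuclideanSpace.basisFun (Fin (n + 1)) ℝ).sum_repr x]
    simp [e]
  have hlast : ∀ j : Fin n, L (e j.castSucc) (Fin.last n) = 0 := fun j => by
    simp [L.apply_last_of_map_northPole hL, e, (Fin.castSucc_lt_last j).ne']
  refine ⟨Matrix.of fun i j => L (e j.castSucc) i.castSucc, ?_, fun x i => ?_⟩
  · ext j k
    have h := L.inner_map_map (e j.castSucc) (e k.castSucc)
    simp only [PiLp.inner_apply, Fin.sum_univ_castSucc, hlast] at h
    simpa [Matrix.mul_apply, e, mul_comm, Matrix.one_apply, eq_comm] using h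
  · have hN : L (e (Fin.last n)) i.castSucc = 0 := by
      rw [show e (Fin.last n) = northPole n from rfl, hL]
      simp [northPole, (Fin.castSucc_lt_last i).ne]
    rw [hcoord, Fin.sum_univ_castSucc, hN, mul_zero, add_zero]
    simp [e, mul_comm]

end LinearIsometry

theorem IsometryEquiv.map_restrict_hausdorffMeasure {X : Type*} [EMetricSpace X]
    [MeasurableSpace X] [BorelSpace X] (e : X ≃ᵢ X) (d : ℝ) {s : Set X} (hs : MeasurableSet s)
    (he : e ⁻¹' s = s) : (μH[d].restrict s).map e = μH[d].restrict s := by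
  simpa only [he] using ((e.measurePreserving_hausdorffMeasure d).restrict_preimage hs).map_eq

theorem map_sigmaPlus_of_eqOn {n : ℕ} {T : Euc n → Euc n} (e : Euc n ≃ᵢ Euc n)
    (hT : EqOn T e (upperHemi n)) (he : e ⁻¹' upperHemi n = upperHemi n) :
    (sigmaPlus n).map T = sigmaPlus n := by
  have hs := (isCompact_upperHemi n).isClosed.measurableSet
  rw [sigmaPlus, Measure.map_smul, Measure.map_congr ((ae_restrict_mem hs).mono hT),
    e.map_restrict_hausdorffMeasure _ hs he]

theorem stmt4_general (n : ℕ) (T : Euc n → Euc n)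
    (hT_maps : ∀ x ∈ upperHemi n, T x ∈ upperHemi n)
    (hT_surj : ∀ y ∈ upperHemi n, ∃ x ∈ upperHemi n, T x = y)
    (hT_lip : ∀ x ∈ upperHemi n, ∀ y ∈ upperHemi n, geod (T x) (T y) ≤ geod x y) :
    T (northPole n) = northPole n ∧
    (∃ A : Matrix (Fin n) (Fin n) ℝ, A.transpose * A = 1 ∧
      ∀ x ∈ upperHemi n,
        (∀ i : Fin n, T x i.castSucc = ∑ j : Fin n, A i j * x j.castSucc) ∧
        T x (Fin.last n) = x (Fin.last n)) ∧
    (∀ x ∈ upperHemi n, ∀ y ∈ upperHemi n, geod (T x) (T y) = geod x y) ∧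
    Measure.map T (sigmaPlus n) = sigmaPlus n := by
  have hinner := inner_map_map_of_surjOn_of_geod_le hT_maps hT_surj hT_lip
  obtain ⟨L, hTL⟩ := exists_linearIsometryEquiv_eqOn (EuclideanSpace.basisFun _ ℝ)
    (fun i => by simpa using single_mem_upperHemi (i := i) (a := 1) (by simp) fun _ => zero_le_one)
    hinner
  have hL : L ⁻¹' upperHemi n = upperHemi n :=
    calc L ⁻¹' upperHemi n = L ⁻¹' (L '' upperHemi n) := by
          rw [← hTL.image_eq, SurjOn.image_eq_of_mapsTo hT_surj hT_maps]
      _ = upperHemi n := preimage_image_eq _ L.injective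
  have hLN := L.map_northPole_of_preimage_upperHemi hL
  obtain ⟨A, hA, hLA⟩ := L.exists_orthogonal_of_map_northPole hLN
  refine ⟨(hTL (northPole_mem_upperHemi n)).trans hLN, ⟨A, hA, fun x hx => ?_⟩,
    fun x hx y hy => by rw [geod, geod, hinner x hx y hy],
    map_sigmaPlus_of_eqOn L.toIsometryEquiv hTL hL⟩
  rw [hTL hx]
  exact ⟨hLA x, L.apply_last_of_map_northPole hLN x⟩

/-- A bijective `1`-Lipschitz map `T : S^n_+ → S^n_+` is an isometry fixing
the north pole, induced by an orthogonal matrix on the first `n` coordinates; in particular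
it pushes `σ_+` forward to `σ_+`. -/
theorem stmt4 (n : ℕ) (hn : 2 ≤ n) (T : Euc n → Euc n)
    (hT_maps : ∀ x ∈ upperHemi n, T x ∈ upperHemi n)
    (hT_inj : Set.InjOn T (upperHemi n))
    (hT_surj : ∀ y ∈ upperHemi n, ∃ x ∈ upperHemi n, T x = y)
    (hT_lip : ∀ x ∈ upperHemi n, ∀ y ∈ upperHemi n, geod (T x) (T y) ≤ geod x y) :
    T (northPole n) = northPole n ∧
    (∃ A : Matrix (Fin n) (Fin n) ℝ, A.transpose * A = 1 ∧
      ∀ x ∈ upperHemi n,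
        (∀ i : Fin n, T x i.castSucc = ∑ j : Fin n, A i j * x j.castSucc) ∧
        T x (Fin.last n) = x (Fin.last n)) ∧
    (∀ x ∈ upperHemi n, ∀ y ∈ upperHemi n, geod (T x) (T y) = geod x y) ∧
    Measure.map T (sigmaPlus n) = sigmaPlus n :=
  stmt4_general n T hT_maps hT_surj hT_lip

end
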